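/- arXiv:2311.01010 — 4 statements merged into one kernel-verified Lean document; each statement's English description precedes it below -/
import Mathlib

section
/- Let ω(S) = (d−1)/(C(d,|S|)·|S|·(d−|S|)) for nonempty proper subsets S of N. Then for fixed i ∈ N and any vector φ ∈ ℝ^d: Σ_{∅ ⊊ S ⊊ N, i ∈ S} ω(S)·(Σ_{j ∈ S} φ_j) = A·φ_i + B·Σ_{j ≠ i} φ_j, where A = ((d−1)/d)·Σ_{k=1}^{d−1} 1/(d−k) and B = A − (d−1)/d. -/
open Finset

/-- The Shapley kernel weight. -/
noncomputable def shapKernel (d : ℕ) (S : Finset (Fin d)) : ℝ :=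
  ((d : ℝ) - 1) / ((d.choose S.card : ℝ) * (S.card : ℝ) * ((d : ℝ) - (S.card : ℝ)))

/-- Shapley kernel weight as a function of cardinality. -/
noncomputable def wk (d k : ℕ) : ℝ :=
  ((d : ℝ) - 1) / ((d.choose k : ℝ) * (k : ℝ) * ((d : ℝ) - (k : ℝ)))

lemma shapKernel_eq_wk (d : ℕ) (S : Finset (Fin d)) : shapKernel d S = wk d S.card := rfl

lemma choose_mul (d k : ℕ) (h1 : 1 ≤ k) (h2 : k ≤ d) :
    d.choose k * k = d * (d - 1).choose (k - 1) := by
  obtain ⟨d', rfl⟩ : ∃ d', d = d' + 1 := ⟨d - 1, by omega⟩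
  obtain ⟨k', rfl⟩ : ∃ k', k = k' + 1 := ⟨k - 1, by omega⟩
  simpa [Nat.succ_sub_one, mul_comm] using (Nat.add_one_mul_choose_eq d' k').symm

lemma choose_mul2 (d k : ℕ) (h1 : 2 ≤ k) (h2 : k ≤ d) :
    d.choose k * k * (k - 1) = d * (d - 1) * (d - 2).choose (k - 2) := by
  have e1 := choose_mul d k (by omega) h2
  have e2 := choose_mul (d-1) (k-1) (by omega) (by omega)
  calc d.choose k * k * (k-1) = d * ((d-1).choose (k-1) * (k-1)) := by rw [e1]; ring
    _ = d * ((d-1) * ((d-1)-1).choose ((k-1)-1)) := by rw [e2]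
    _ = d * (d-1) * (d-2).choose (k-2) := by
        rw [show (d-1)-1 = d-2 by omega, show (k-1)-1 = k-2 by omega]; ring

section arith
variable (d k : ℕ) (hd : 2 ≤ d) (h1 : 1 ≤ k) (h2 : k ≤ d - 1)
include hd h1 h2

lemma basic_ne :
    ((d:ℝ) - k ≠ 0) ∧ ((d.choose k : ℝ) * k * ((d:ℝ) - k) ≠ 0) ∧ ((d:ℝ) * ((d:ℝ) - k) ≠ 0) := by
  have hkd : (k:ℝ) < d := by exact_mod_cast (by omega : k < d)
  have hdk : (d:ℝ) - k ≠ 0 := by linarith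
  have hc : (d.choose k : ℝ) ≠ 0 := by
    exact_mod_cast (Nat.choose_pos (by omega : k ≤ d)).ne'
  have hk0 : (k:ℝ) ≠ 0 := by exact_mod_cast (by omega : k ≠ 0)
  have hd0 : (d:ℝ) ≠ 0 := by positivity
  exact ⟨hdk, by positivity, by positivity⟩

lemma term1 :
    ((d - 1).choose (k - 1) : ℝ) * wk d k = ((d:ℝ) - 1) / ((d:ℝ) * ((d:ℝ) - k)) := by
  obtain ⟨hdk, hA, hB⟩ := basic_ne d k hd h1 h2
  have key : (d.choose k : ℝ) * k = (d : ℝ) * ((d-1).choose (k-1) : ℝ) := by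
    exact_mod_cast congrArg (Nat.cast : ℕ → ℝ) (choose_mul d k h1 (by omega))
  rw [wk, mul_div_assoc', div_eq_div_iff hA hB]
  linear_combination (-(((d:ℝ)-1)*((d:ℝ)-k))) * key

lemma term2' (h1' : 2 ≤ k) :
    ((d - 2).choose (k - 2) : ℝ) * wk d k = ((k:ℝ) - 1) / ((d:ℝ) * ((d:ℝ) - k)) := by
  obtain ⟨hdk, hA, hB⟩ := basic_ne d k hd h1 h2
  have key : (d.choose k : ℝ) * k * ((k:ℝ) - 1)
      = (d:ℝ) * ((d:ℝ) - 1) * ((d-2).choose (k-2) : ℝ) := by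
    have keyN : ((d.choose k * k * (k-1) : ℕ) : ℝ)
        = ((d * (d-1) * (d-2).choose (k-2) : ℕ) : ℝ) := by
      exact_mod_cast choose_mul2 d k h1' (by omega)
    push_cast [Nat.cast_sub (show 1 ≤ k by omega), Nat.cast_sub (show 1 ≤ d by omega)] at keyN
    linarith [keyN]
  rw [wk, mul_div_assoc', div_eq_div_iff hA hB]
  linear_combination ((k:ℝ) - d) * key

end arith

lemma count_gen {d : ℕ} (A : Finset (Fin d)) (k : ℕ) (hk : A.card ≤ k) :
    (Finset.univ.filter fun S : Finset (Fin d) => S.card = k ∧ A ⊆ S).card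
      = (d - A.card).choose (k - A.card) := by
  have h1 : ((Finset.univ \ A : Finset (Fin d)).powersetCard (k - A.card)).card
      = (d - A.card).choose (k - A.card) := by
    rw [card_powersetCard, card_sdiff_of_subset (subset_univ A), card_univ, Fintype.card_fin]
  rw [← h1]
  apply Finset.card_bij' (fun S _ => S \ A) (fun T _ => T ∪ A)
  · intro S hS
    simp only [mem_filter, mem_univ, true_and] at hS
    rw [mem_powersetCard]
    exact ⟨sdiff_subset_sdiff (subset_univ S) le_rfl,
      by rw [card_sdiff_of_subset hS.2, hS.1]⟩
  · intro T hT
    rw [mem_powersetCard] at hT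
    have hdisj : Disjoint T A := disjoint_of_subset_left hT.1 sdiff_disjoint
    simp only [mem_filter, mem_univ, true_and]
    constructor
    · rw [card_union_of_disjoint hdisj, hT.2]
      omega
    · exact subset_union_right
  · intro S hS
    simp only [mem_filter, mem_univ, true_and] at hS
    exact sdiff_union_of_subset hS.2
  · intro T hT
    rw [mem_powersetCard] at hT
    exact union_sdiff_cancel_right (disjoint_of_subset_left hT.1 sdiff_disjoint)

lemma sum_by_card {d : ℕ} (A : Finset (Fin d)) :
    ∑ S ∈ Finset.univ.filter
        (fun S : Finset (Fin d) => S.Nonempty ∧ S ≠ Finset.univ ∧ A ⊆ S),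
      wk d S.card
      = ∑ k ∈ Finset.Icc (max 1 A.card) (d-1),
          ((d - A.card).choose (k - A.card) : ℝ) * wk d k := by
  rw [← Finset.sum_fiberwise_of_maps_to (g := Finset.card)
      (t := Finset.Icc (max 1 A.card) (d-1))]
  · refine Finset.sum_congr rfl fun k hk => ?_
    simp only [Finset.mem_Icc, max_le_iff] at hk
    have hset : (Finset.univ.filter
          (fun S : Finset (Fin d) => S.Nonempty ∧ S ≠ Finset.univ ∧ A ⊆ S)).filter
          (fun S => S.card = k)
        = Finset.univ.filter (fun S : Finset (Fin d) => S.card = k ∧ A ⊆ S) := by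
      ext S
      simp only [Finset.mem_filter, Finset.mem_univ, true_and]
      constructor
      · rintro ⟨⟨_, _, hs⟩, hc⟩; exact ⟨hc, hs⟩
      · rintro ⟨hc, hs⟩
        refine ⟨⟨Finset.card_pos.mp (by omega), fun h => ?_, hs⟩, hc⟩
        rw [h] at hc
        simp only [Finset.card_univ, Fintype.card_fin] at hc
        omega
    have hval : ∀ S ∈ Finset.univ.filter (fun S : Finset (Fin d) => S.card = k ∧ A ⊆ S),
        wk d S.card = wk d k := by
      intro S hS
      simp only [Finset.mem_filter] at hS
      rw [hS.2.1]
    rw [hset, Finset.sum_congr rfl hval, Finset.sum_const, nsmul_eq_mul,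
      count_gen A k hk.1.2]
  · intro S hS
    simp only [Finset.mem_filter, Finset.mem_univ, true_and] at hS
    rw [Finset.mem_Icc, max_le_iff]
    have h1 : 1 ≤ S.card := Finset.card_pos.mpr hS.1
    have h2 : S.card < d := by
      have := Finset.card_lt_card (Finset.ssubset_univ_iff.mpr hS.2.1)
      simpa [Finset.card_univ] using this
    exact ⟨⟨h1, Finset.card_le_card hS.2.2⟩, by omega⟩

lemma sum_first (d : ℕ) (hd : 2 ≤ d) :
    ∑ k ∈ Finset.Icc 1 (d-1), ((d:ℝ) - 1) / ((d:ℝ) * ((d:ℝ) - k))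
      = ((d : ℝ) - 1) / d * ∑ k ∈ Finset.Icc 1 (d - 1), (1 : ℝ) / ((d : ℝ) - (k : ℝ)) := by
  rw [Finset.mul_sum]
  refine Finset.sum_congr rfl fun k _ => ?_
  rw [div_mul_div_comm, mul_one]

lemma coefA {d : ℕ} (hd : 2 ≤ d) (i : Fin d) :
    ∑ S ∈ Finset.univ.filter
        (fun S : Finset (Fin d) => S.Nonempty ∧ S ≠ Finset.univ ∧ i ∈ S),
      shapKernel d S
      = ((d : ℝ) - 1) / d * ∑ k ∈ Finset.Icc 1 (d - 1), (1 : ℝ) / ((d : ℝ) - (k : ℝ)) := by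
  have h := sum_by_card ({i} : Finset (Fin d))
  simp only [Finset.card_singleton, max_self, Finset.singleton_subset_iff] at h
  simp only [shapKernel_eq_wk]
  rw [h, ← sum_first d hd]
  refine Finset.sum_congr rfl fun k hk => ?_
  simp only [Finset.mem_Icc] at hk
  exact term1 d k hd hk.1 hk.2

lemma coefB {d : ℕ} (hd : 2 ≤ d) (i j : Fin d) (hij : j ≠ i) :
    ∑ S ∈ Finset.univ.filter
        (fun S : Finset (Fin d) => (S.Nonempty ∧ S ≠ Finset.univ ∧ i ∈ S) ∧ j ∈ S),
      shapKernel d S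
      = ((d : ℝ) - 1) / d * (∑ k ∈ Finset.Icc 1 (d - 1), (1 : ℝ) / ((d : ℝ) - (k : ℝ)))
        - ((d : ℝ) - 1) / d := by
  have hpair : ({i, j} : Finset (Fin d)).card = 2 := Finset.card_pair (Ne.symm hij)
  have h := sum_by_card ({i, j} : Finset (Fin d))
  rw [hpair] at h
  have hpred : ∀ S : Finset (Fin d),
      ((S.Nonempty ∧ S ≠ Finset.univ ∧ i ∈ S) ∧ j ∈ S)
      ↔ (S.Nonempty ∧ S ≠ Finset.univ ∧ ({i, j} : Finset (Fin d)) ⊆ S) := by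
    intro S
    simp only [Finset.insert_subset_iff, Finset.singleton_subset_iff]
    tauto
  simp only [shapKernel_eq_wk]
  rw [show (Finset.univ.filter
        (fun S : Finset (Fin d) => (S.Nonempty ∧ S ≠ Finset.univ ∧ i ∈ S) ∧ j ∈ S))
      = Finset.univ.filter
        (fun S : Finset (Fin d) => S.Nonempty ∧ S ≠ Finset.univ ∧ ({i,j} : Finset (Fin d)) ⊆ S)
    from Finset.filter_congr fun S _ => by rw [hpred S], h]
  -- now: ∑ k ∈ Icc (max 1 2) (d-1), choose(d-2)(k-2) * wk d k = A - (d-1)/d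
  have hmax : max 1 2 = 2 := rfl
  rw [hmax]
  have step1 : ∑ k ∈ Finset.Icc 2 (d-1), ((d - 2).choose (k - 2) : ℝ) * wk d k
      = ∑ k ∈ Finset.Icc 2 (d-1), ((k:ℝ) - 1) / ((d:ℝ) * ((d:ℝ) - k)) := by
    refine Finset.sum_congr rfl fun k hk => ?_
    simp only [Finset.mem_Icc] at hk
    exact term2' d k hd (by omega) hk.2 hk.1
  rw [step1]
  have step2 : ∑ k ∈ Finset.Icc 2 (d-1), ((k:ℝ) - 1) / ((d:ℝ) * ((d:ℝ) - k))
      = ∑ k ∈ Finset.Icc 1 (d-1), ((k:ℝ) - 1) / ((d:ℝ) * ((d:ℝ) - k)) := by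
    have h11 : (1:ℕ) ≤ d - 1 := by omega
    rw [show Finset.Icc 2 (d-1) = Finset.Ioc 1 (d-1) by
        ext x; simp [Finset.mem_Icc, Finset.mem_Ioc]; omega,
      ← Finset.Ioc_insert_left h11, Finset.sum_insert (by simp)]
    norm_num
  rw [step2]
  have hd0 : (d:ℝ) ≠ 0 := by positivity
  have step3 : ∀ k ∈ Finset.Icc 1 (d-1),
      ((k:ℝ) - 1) / ((d:ℝ) * ((d:ℝ) - k))
      = ((d:ℝ) - 1) / ((d:ℝ) * ((d:ℝ) - k)) - 1 / d := by
    intro k hk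
    simp only [Finset.mem_Icc] at hk
    have hdk : (d:ℝ) - k ≠ 0 := by
      have : (k:ℝ) < d := by exact_mod_cast (by omega : k < d)
      linarith
    field_simp
    ring
  rw [Finset.sum_congr rfl step3, Finset.sum_sub_distrib, sum_first d hd,
    Finset.sum_const, Nat.card_Icc]
  have : ((d - 1 + 1 - 1 : ℕ) : ℝ) = (d:ℝ) - 1 := by
    rw [show d - 1 + 1 - 1 = d - 1 by omega, Nat.cast_sub (by omega)]
    norm_num
  rw [nsmul_eq_mul, this]
  ring

/-- weighted sums of the Shapley kernel over nonempty proper subsets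
containing `i`. -/
theorem shapKernel_weighted_sum (d : ℕ) (hd : 2 ≤ d) (i : Fin d) (φ : Fin d → ℝ) :
    ∑ S ∈ Finset.univ.filter
        (fun S : Finset (Fin d) => S.Nonempty ∧ S ≠ Finset.univ ∧ i ∈ S),
      shapKernel d S * (∑ j ∈ S, φ j) =
    (((d : ℝ) - 1) / d * ∑ k ∈ Finset.Icc 1 (d - 1), (1 : ℝ) / ((d : ℝ) - (k : ℝ))) * φ i +
      ((((d : ℝ) - 1) / d * ∑ k ∈ Finset.Icc 1 (d - 1), (1 : ℝ) / ((d : ℝ) - (k : ℝ))) -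
          ((d : ℝ) - 1) / d) * ∑ j ∈ Finset.univ.erase i, φ j := by
  set F := Finset.univ.filter
      (fun S : Finset (Fin d) => S.Nonempty ∧ S ≠ Finset.univ ∧ i ∈ S) with hF
  set A := ((d : ℝ) - 1) / d * ∑ k ∈ Finset.Icc 1 (d - 1), (1 : ℝ) / ((d : ℝ) - (k : ℝ))
    with hA
  have swap : ∑ S ∈ F, shapKernel d S * (∑ j ∈ S, φ j)
      = ∑ j : Fin d, (∑ S ∈ F.filter (fun S => j ∈ S), shapKernel d S) * φ j := by
    have e1 : ∀ S ∈ F, shapKernel d S * (∑ j ∈ S, φ j)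
        = ∑ j : Fin d, (if j ∈ S then shapKernel d S * φ j else 0) := by
      intro S _
      rw [Finset.mul_sum, ← Finset.sum_filter]
      congr 1
      simp [Finset.filter_mem_eq_inter]
    rw [Finset.sum_congr rfl e1, Finset.sum_comm]
    refine Finset.sum_congr rfl fun j _ => ?_
    rw [← Finset.sum_filter, Finset.sum_mul]
  rw [swap]
  have hiF : ∀ S ∈ F, i ∈ S := by
    intro S hS
    simp only [hF, Finset.mem_filter] at hS
    exact hS.2.2.2
  rw [← Finset.add_sum_erase _ _ (Finset.mem_univ i)]
  congr 1
  · rw [Finset.filter_true_of_mem hiF, hF, coefA hd i]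
  · rw [Finset.mul_sum]
    refine Finset.sum_congr rfl fun j hj => ?_
    have hij : j ≠ i := (Finset.mem_erase.mp hj).1
    congr 1
    rw [hF, Finset.filter_filter]
    exact coefB hd i j hij
end

section
/- For d ≥ 2, the Shapley-kernel Gram matrix satisfies U^T W U = ((d−1)/d)·I + B·J, where B = ((d−1)/d)·(Σ_{k=1}^{d−1} 1/(d−k)) − (d−1)/d, I is the d×d identity, and J is the d×d all-ones matrix. -/
open Finset Matrix

/-- The indicator matrix `U`, with one row for each nonempty proper subset of `N`. -/
def indMat (d : ℕ) :
    Matrix {S : Finset (Fin d) // S.Nonempty ∧ S ≠ Finset.univ} (Fin d) ℝ :=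
  fun S i => if i ∈ S.1 then 1 else 0

/-- The diagonal Shapley-kernel weight matrix `W`. -/
noncomputable def wMat (d : ℕ) :
    Matrix {S : Finset (Fin d) // S.Nonempty ∧ S ≠ Finset.univ}
      {S : Finset (Fin d) // S.Nonempty ∧ S ≠ Finset.univ} ℝ :=
  Matrix.diagonal (fun S => shapKernel d S.1)

/-!
Entry `(i, j)` of `Uᵀ W U` is the total weight `∑ ω(S)` over the subsets `S ⊇ {i, j}`. Grouping
by `s = |S|`, a `t`-set lies in `C(d - t, s - t)` subsets of size `s`, and
`C(d, s) C(s, t) = C(d, t) C(d - t, s - t)` turns the size-`s` contribution into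
`(d - 1) C(s, t) / (C(d, t) s (d - s))`. For `t = 1` this is `(d - 1) / (d (d - s))`, giving the
harmonic sum on the diagonal; for `t = 2` it is `(s - 1) / (d (d - s))`, which is the diagonal
term minus `1 / d`.
-/

theorem Finset.sum_Icc_apply_card {α M : Type*} [DecidableEq α] [AddCommMonoid M]
    {T U : Finset α} (hTU : T ⊆ U) (f : ℕ → M) :
    ∑ S ∈ Icc T U, f #S = ∑ s ∈ Icc #T #U, (#U - #T).choose (s - #T) • f s := by
  have hdisj {R : Finset α} (hR : R ∈ (U \ T).powerset) : Disjoint T R :=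
    disjoint_of_subset_right (mem_powerset.1 hR) disjoint_sdiff
  have hinj : Set.InjOn (T ∪ ·) ((U \ T).powerset : Set (Finset α)) := fun A hA B hB hAB => by
    simpa only [union_sdiff_cancel_left (hdisj hA), union_sdiff_cancel_left (hdisj hB)]
      using congr_arg (· \ T) hAB
  rw [Icc_eq_image_powerset hTU, sum_image hinj,
    sum_congr rfl fun R hR => by rw [card_union_of_disjoint (hdisj hR)],
    sum_powerset_apply_card (fun m => f (#T + m)), card_sdiff_of_subset hTU,
    ← Ico_add_one_right_eq_Icc, sum_Ico_eq_sum_range, Nat.sub_add_comm (card_le_card hTU)]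
  simp only [Nat.add_sub_cancel_left]

section Shapley

variable {d : ℕ}

noncomputable def shapWeight (d s : ℕ) : ℝ :=
  ((d : ℝ) - 1) / ((d.choose s : ℝ) * s * ((d : ℝ) - s))

theorem shapKernel_eq_shapWeight (S : Finset (Fin d)) : shapKernel d S = shapWeight d #S := rfl

theorem shapWeight_self : shapWeight d d = 0 := by simp [shapWeight]

/-- Division by zero makes `shapKernel d ∅ = shapKernel d univ = 0`, so the sum may run over all
supersets of `{i, j}` rather than over the nonempty proper ones that index `U`. -/
theorem gram_apply (i j : Fin d) :
    ((indMat d)ᵀ * wMat d * indMat d) i j = ∑ S ∈ Icc {i, j} univ, shapKernel d S := by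
  classical
  have hproper (S : Finset (Fin d)) (hS : shapKernel d S ≠ 0) : S.Nonempty ∧ S ≠ univ := by
    refine ⟨nonempty_iff_ne_empty.2 ?_, ?_⟩ <;> rintro rfl <;> simp [shapKernel] at hS
  have hIcc : Icc {i, j} univ = univ.filter fun S => i ∈ S ∧ j ∈ S := by
    ext S
    simp [insert_subset_iff]
  rw [mul_apply, hIcc, sum_filter,
    ← sum_filter_of_ne fun S _ hS => hproper S fun h => hS (by simp [h])]
  simp only [wMat, mul_diagonal, transpose_apply, indMat]
  rw [← sum_subtype_eq_sum_filter, subtype_univ]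
  refine sum_congr rfl fun S _ => ?_
  split_ifs <;> simp_all

theorem choose_sub_mul_shapWeight {t s : ℕ} (hts : t ≤ s) (hsd : s ≤ d) :
    ((d - t).choose (s - t) : ℝ) * shapWeight d s =
      ((d : ℝ) - 1) / d.choose t * (s.choose t / (s * ((d : ℝ) - s))) := by
  have hratio : ((d - t).choose (s - t) : ℝ) / d.choose s = s.choose t / d.choose t := by
    rw [div_eq_div_iff (by exact_mod_cast (Nat.choose_pos hsd).ne')
      (by exact_mod_cast (Nat.choose_pos (hts.trans hsd)).ne')]
    norm_cast
    rw [mul_comm, ← Nat.choose_mul hts, mul_comm]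
  rw [shapWeight, mul_assoc, mul_comm (d.choose s : ℝ), ← div_div, mul_div_left_comm, hratio]
  ring

theorem sum_Icc_choose_sub_mul_shapWeight {t : ℕ} (ht : 1 ≤ t) (htd : t ≤ d) :
    ∑ s ∈ Icc t d, ((d - t).choose (s - t) : ℝ) * shapWeight d s =
      ((d : ℝ) - 1) / d.choose t * ∑ s ∈ Icc 1 (d - 1), s.choose t / (s * ((d : ℝ) - s)) := by
  have hdrop_top : ∑ s ∈ Icc t d, ((d - t).choose (s - t) : ℝ) * shapWeight d s =
      ∑ s ∈ Icc t (d - 1), ((d - t).choose (s - t) : ℝ) * shapWeight d s := by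
    obtain ⟨e, rfl⟩ : ∃ e, d = e + 1 := ⟨d - 1, by omega⟩
    rw [Nat.add_sub_cancel, sum_Icc_succ_top htd, shapWeight_self, mul_zero, add_zero]
  rw [mul_sum, ← sum_subset (Icc_subset_Icc_left ht) fun s hs hst => ?_, hdrop_top]
  · exact sum_congr rfl fun s hs => choose_sub_mul_shapWeight (mem_Icc.1 hs).1 (by grind)
  · have hst : s < t := by simp only [mem_Icc] at hs hst; omega
    simp [Nat.choose_eq_zero_of_lt hst]

theorem sum_Icc_choose_pred_mul_shapWeight (hd : 1 ≤ d) :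
    ∑ s ∈ Icc 1 d, ((d - 1).choose (s - 1) : ℝ) * shapWeight d s =
      ((d : ℝ) - 1) / d * ∑ k ∈ Icc 1 (d - 1), (1 : ℝ) / ((d : ℝ) - k) := by
  rw [sum_Icc_choose_sub_mul_shapWeight le_rfl hd, Nat.choose_one_right]
  congr 1
  refine sum_congr rfl fun s hs => ?_
  have hs0 : (s : ℝ) ≠ 0 := Nat.cast_ne_zero.2 (by simp only [mem_Icc] at hs; omega)
  rw [Nat.choose_one_right, div_mul_cancel_left₀ hs0, one_div]

theorem sum_Icc_choose_sub_two_mul_shapWeight (hd : 2 ≤ d) :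
    ∑ s ∈ Icc 2 d, ((d - 2).choose (s - 2) : ℝ) * shapWeight d s =
      ((d : ℝ) - 1) / d * ∑ k ∈ Icc 1 (d - 1), (1 : ℝ) / ((d : ℝ) - k) - ((d : ℝ) - 1) / d := by
  have hterm : ∀ s ∈ Icc 1 (d - 1), (s.choose 2 : ℝ) / (s * ((d : ℝ) - s)) =
      (((d : ℝ) - 1) * (1 / ((d : ℝ) - s)) - 1) / 2 := by
    intro s hs
    rw [mem_Icc] at hs
    have hs0 : (s : ℝ) ≠ 0 := Nat.cast_ne_zero.2 (by omega)
    have hsd : (d : ℝ) - s ≠ 0 := sub_ne_zero.2 (by exact_mod_cast (by omega : d ≠ s))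
    rw [Nat.cast_choose_two]
    field_simp
    ring
  have hd0 : (d : ℝ) ≠ 0 := by positivity
  have hd1 : (d : ℝ) - 1 ≠ 0 := by
    have : (2 : ℝ) ≤ d := by exact_mod_cast hd
    linarith
  rw [sum_Icc_choose_sub_mul_shapWeight one_le_two hd, sum_congr rfl hterm, ← sum_div,
    sum_sub_distrib, ← mul_sum, sum_const, Nat.card_Icc, Nat.add_sub_cancel, nsmul_eq_mul,
    Nat.cast_pred (by omega), Nat.cast_choose_two]
  field_simp

end Shapley

/-- `Uᵀ W U = ((d−1)/d)·I + B·J`. -/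
theorem gram_matrix_eq (d : ℕ) (hd : 2 ≤ d) :
    (indMat d)ᵀ * wMat d * indMat d =
      (((d : ℝ) - 1) / d) • (1 : Matrix (Fin d) (Fin d) ℝ) +
        ((((d : ℝ) - 1) / d * ∑ k ∈ Finset.Icc 1 (d - 1), (1 : ℝ) / ((d : ℝ) - (k : ℝ))) -
            ((d : ℝ) - 1) / d) • (Matrix.of fun _ _ => (1 : ℝ)) := by
  ext i j
  simp only [gram_apply, shapKernel_eq_shapWeight]
  rw [sum_Icc_apply_card (subset_univ _), card_univ, Fintype.card_fin]
  simp only [nsmul_eq_mul]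
  rcases eq_or_ne i j with rfl | hij
  · rw [pair_eq_singleton, card_singleton, sum_Icc_choose_pred_mul_shapWeight (one_le_two.trans hd)]
    simp
  · rw [card_pair hij, sum_Icc_choose_sub_two_mul_shapWeight hd]
    simp [one_apply_ne hij]
end

section
/- The unique minimizer of the constrained weighted least squares problem min_φ Σ_{∅ ⊊ S ⊊ N} ω(S)·(v(S) − v(∅) − Σ_{i∈S} φ_i)² subject to Σ_i φ_i = v(N) − v(∅) is the Shapley value vector. -/
open Finset

noncomputable def shapley (d : ℕ) (v : Finset (Fin d) → ℝ) (i : Fin d) : ℝ :=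
  ∑ S ∈ (Finset.univ.erase i).powerset,
    ((S.card.factorial : ℝ) * ((d - S.card - 1).factorial : ℝ) / (d.factorial : ℝ)) *
      (v (insert i S) - v S)

/-- The constrained weighted least squares objective. -/
noncomputable def lsLoss (d : ℕ) (v : Finset (Fin d) → ℝ) (φ : Fin d → ℝ) : ℝ :=
  ∑ S ∈ Finset.univ.filter (fun S : Finset (Fin d) => S.Nonempty ∧ S ≠ Finset.univ),
    shapKernel d S * (v S - v ∅ - ∑ j ∈ S, φ j) ^ 2

/-! Write `φ = shapley d v + h` with `∑ i, h i = 0`. The link between the kernel and the Shapley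
weights `p t = t! (d - t - 1)! / d!` is `ω (T ∪ {i}) = (d - 1) / d * (p |T| + p (|T| + 1))`.
Hence the kernel mass of the coalitions containing `i` but not `j` is `(d - 1) / d`, which turns
the quadratic term `∑ S, ω S * (∑ k ∈ S, h k) ^ 2` into `(d - 1) / d * ∑ i, h i ^ 2`; and, since
`φᵢ - φⱼ` is the `(p |T| + p (|T| + 1))`-average of `v (T ∪ {i}) - v (T ∪ {j})`, the
`ω`-weighted residual of the Shapley value summed over the coalitions containing `i` does not
depend on `i`, so the cross term vanishes. Thus
`lsLoss φ = lsLoss (shapley d v) + (d - 1) / d * ‖φ - shapley d v‖²`. -/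

section Coalitions

variable {α : Type*} [Fintype α] [DecidableEq α]

lemma sum_sum_powerset_erase_eq_sum_sum_compl {M : Type*} [AddCommMonoid M]
    (g : α → Finset α → M) :
    ∑ i, ∑ S ∈ (univ.erase i).powerset, g i S = ∑ S, ∑ i ∈ Sᶜ, g i S :=
  sum_comm' (by simp [subset_erase])

lemma sum_sum_powerset_erase_insert_eq_sum_sum {M : Type*} [AddCommMonoid M]
    (g : α → Finset α → M) :
    ∑ i, ∑ S ∈ (univ.erase i).powerset, g i (insert i S) = ∑ T, ∑ i ∈ T, g i T := by
  have reindex : ∀ i, ∑ S ∈ (univ.erase i).powerset, g i (insert i S) = ∑ T with i ∈ T, g i T :=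
    fun i => sum_nbij' (insert i) (erase · i) (by simp [subset_erase]) (by simp [subset_erase])
      (by simp_all [subset_erase]) (by simp_all) (by simp)
  simp_rw [reindex]
  exact sum_comm' (by simp)

lemma sum_filter_mem_notMem_eq_sum_powerset {M : Type*} [AddCommMonoid M] {i j : α}
    (hij : i ≠ j) (g : Finset α → M) :
    ∑ S with i ∈ S ∧ j ∉ S, g S = ∑ T ∈ ((univ.erase i).erase j).powerset, g (insert i T) := by
  refine sum_nbij' (erase · i) (insert i) ?_ ?_ ?_ ?_ ?_ <;> intro S hS <;>
    simp_all [subset_erase, Ne.symm hij]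

lemma sum_filter_mem_sub_sum_filter_mem {M : Type*} [AddCommGroup M] (g : Finset α → M)
    (i j : α) :
    ∑ S with i ∈ S, g S - ∑ S with j ∈ S, g S
      = ∑ S with i ∈ S ∧ j ∉ S, g S - ∑ S with j ∈ S ∧ i ∉ S, g S := by
  simp only [sum_filter, ← sum_sub_distrib]
  refine sum_congr rfl fun S _ => ?_
  by_cases hi : i ∈ S <;> by_cases hj : j ∈ S <;> simp [hi, hj]

lemma sum_mul_sum_eq_sum_mul_sum_filter_mem {R : Type*} [NonUnitalNonAssocSemiring R]
    (f : Finset α → R) (h : α → R) :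
    ∑ S, f S * ∑ k ∈ S, h k = ∑ k, (∑ S with k ∈ S, f S) * h k := by
  simp_rw [mul_sum, sum_mul]
  exact sum_comm' (by simp)

lemma sum_mul_sum_eq_zero_of_sum_filter_mem_eq {f : Finset α → ℝ}
    (hf : ∀ i j, ∑ S with i ∈ S, f S = ∑ S with j ∈ S, f S) {h : α → ℝ} (h0 : ∑ i, h i = 0) :
    ∑ S, f S * ∑ k ∈ S, h k = 0 := by
  rw [sum_mul_sum_eq_sum_mul_sum_filter_mem]
  rcases isEmpty_or_nonempty α with _ | ⟨⟨i⟩⟩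
  · simp
  simp_rw [hf _ i, ← mul_sum, h0, mul_zero]

lemma sq_sum_eq_neg_sum_sum_compl {h : α → ℝ} (h0 : ∑ i, h i = 0) (S : Finset α) :
    (∑ k ∈ S, h k) ^ 2 = -∑ a ∈ S, ∑ b ∈ Sᶜ, h a * h b := by
  have hc : ∑ k ∈ Sᶜ, h k = -∑ k ∈ S, h k := by
    rw [eq_neg_iff_add_eq_zero, add_comm, sum_add_sum_compl, h0]
  rw [← sum_mul_sum, hc, mul_neg, neg_neg, sq]

lemma sum_mul_sq_sum_eq_of_sum_filter_mem_notMem {f : Finset α → ℝ} {κ : ℝ}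
    (hf : ∀ i j, i ≠ j → ∑ S with i ∈ S ∧ j ∉ S, f S = κ) {h : α → ℝ} (h0 : ∑ i, h i = 0) :
    ∑ S, f S * (∑ k ∈ S, h k) ^ 2 = κ * ∑ i, h i ^ 2 := by
  have pair : ∀ a b, ∑ S with a ∈ S ∧ b ∉ S, f S = κ - if a = b then κ else 0 := by
    intro a b
    split_ifs with hab
    · simp [hab]
    · simp [hf a b hab]
  have swap : ∑ S, f S * ∑ a ∈ S, ∑ b ∈ Sᶜ, h a * h b
      = ∑ a, ∑ b, (∑ S with a ∈ S ∧ b ∉ S, f S) * (h a * h b) := by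
    simp_rw [mul_sum, sum_mul]
    rw [sum_comm' (t' := univ) (s' := fun a => {S | a ∈ S}) (by simp)]
    exact sum_congr rfl fun a _ => sum_comm' (by simp)
  simp_rw [sq_sum_eq_neg_sum_sum_compl h0, mul_neg, sum_neg_distrib, swap, pair, sub_mul,
    sum_sub_distrib, ite_mul, zero_mul, sum_ite_eq, mem_univ, if_true, ← mul_sum, ← sum_mul, h0]
  simp only [mul_zero, zero_sub, neg_neg, sq]

end Coalitions

noncomputable def shapleyWeight (d t : ℕ) : ℝ := t.factorial * (d - t - 1).factorial / d.factorial

lemma shapley_eq_sum_shapleyWeight (d : ℕ) (v : Finset (Fin d) → ℝ) (i : Fin d) :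
    shapley d v i
      = ∑ S ∈ (univ.erase i).powerset, shapleyWeight d S.card * (v (insert i S) - v S) :=
  rfl

lemma natCast_mul_shapleyWeight_pred_sub {d t : ℕ} (ht : t ≤ d) :
    t * shapleyWeight d (t - 1) - ((d - t : ℕ) : ℝ) * shapleyWeight d t
      = (if t = d then 1 else 0) - (if t = 0 then 1 else 0) := by
  have hd : (d.factorial : ℝ) ≠ 0 := by positivity
  have pred : t ≠ 0 →
      (t : ℝ) * shapleyWeight d (t - 1) = t.factorial * (d - t).factorial / d.factorial :=
    fun ht0 => by
      rw [shapleyWeight, show d - (t - 1) - 1 = d - t by omega, ← Nat.mul_factorial_pred ht0]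
      push_cast; ring
  have compl : t ≠ d →
      ((d - t : ℕ) : ℝ) * shapleyWeight d t = t.factorial * (d - t).factorial / d.factorial :=
    fun htd => by
      rw [shapleyWeight, ← Nat.mul_factorial_pred (show d - t ≠ 0 by omega), Nat.sub_sub]
      push_cast; ring
  rcases eq_or_ne t 0 with rfl | ht0
  · rcases eq_or_ne d 0 with rfl | hd0
    · simp
    · rw [compl (Ne.symm hd0)]
      simp [Ne.symm hd0, hd]
  · rcases eq_or_ne t d with rfl | htd
    · rw [pred ht0]
      simp [ht0, hd]
    · rw [pred ht0, compl htd, if_neg htd, if_neg ht0, sub_self, sub_self]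

lemma sum_shapley (d : ℕ) (v : Finset (Fin d) → ℝ) : ∑ i, shapley d v i = v univ - v ∅ := by
  have card_pred : ∀ i : Fin d, ∀ S ∈ (univ.erase i).powerset,
      shapleyWeight d S.card = shapleyWeight d ((insert i S).card - 1) := fun i S hS => by
    rw [card_insert_of_notMem (by simpa [subset_erase] using hS), Nat.add_sub_cancel]
  have coeff : ∀ T : Finset (Fin d), T.card * shapleyWeight d (T.card - 1)
      - ((d - T.card : ℕ) : ℝ) * shapleyWeight d T.card
        = (if T = univ then 1 else 0) - (if T = ∅ then 1 else 0) := fun T => by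
    simp_rw [natCast_mul_shapleyWeight_pred_sub (by simpa using card_le_univ T),
      ← Finset.card_eq_zero, ← card_eq_iff_eq_univ, Fintype.card_fin]
  simp_rw [shapley_eq_sum_shapleyWeight, mul_sub, sum_sub_distrib]
  rw [sum_congr rfl fun i _ => sum_congr rfl fun S hS => by rw [card_pred i S hS],
    sum_sum_powerset_erase_insert_eq_sum_sum (fun _ T => shapleyWeight d (T.card - 1) * v T),
    sum_sum_powerset_erase_eq_sum_sum_compl (fun _ S => shapleyWeight d S.card * v S)]
  simp_rw [sum_const, card_compl, Fintype.card_fin, nsmul_eq_mul, ← sum_sub_distrib, ← mul_assoc,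
    ← sub_mul, coeff, sub_mul, sum_sub_distrib, ite_mul, one_mul, zero_mul, sum_ite_eq', mem_univ,
    if_true]

lemma sum_powerset_erase_shapleyWeight {d : ℕ} (i : Fin d) :
    ∑ S ∈ (univ.erase i).powerset, shapleyWeight d S.card = 1 := by
  obtain ⟨n, rfl⟩ : ∃ n, d = n + 1 := ⟨d - 1, by have := i.pos; omega⟩
  have term : ∀ k ∈ range (n + 1),
      n.choose k • shapleyWeight (n + 1) k = ((n + 1 : ℕ) : ℝ)⁻¹ := by
    intro k hk
    have hk : k ≤ n := by simpa [Nat.lt_succ_iff] using hk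
    rw [nsmul_eq_mul, shapleyWeight, show n + 1 - k - 1 = n - k by omega, Nat.factorial_succ,
      ← Nat.choose_mul_factorial_mul_factorial hk]
    push_cast
    have : (n.choose k : ℝ) ≠ 0 := by exact_mod_cast (Nat.choose_pos hk).ne'
    field_simp
  rw [sum_powerset_apply_card, card_erase_of_mem (mem_univ i), Finset.card_univ,
    Fintype.card_fin, add_tsub_cancel_right, sum_congr rfl term, sum_const, card_range,
    nsmul_eq_mul, mul_inv_cancel₀ (by positivity)]

lemma sum_powerset_erase_shapleyWeight_mul {d : ℕ} {i j : Fin d} (hij : i ≠ j)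
    (F : Finset (Fin d) → ℝ) :
    ∑ S ∈ (univ.erase i).powerset, shapleyWeight d S.card * F S
      = ∑ T ∈ ((univ.erase i).erase j).powerset,
          (shapleyWeight d T.card * F T + shapleyWeight d (T.card + 1) * F (insert j T)) := by
  conv_lhs => rw [← insert_erase (mem_erase.2 ⟨hij.symm, mem_univ j⟩),
    sum_powerset_insert (notMem_erase j _), ← sum_add_distrib]
  refine sum_congr rfl fun T hT => ?_
  rw [card_insert_of_notMem (notMem_of_mem_powerset_of_notMem hT (notMem_erase j _))]

lemma shapley_sub_shapley {d : ℕ} (v : Finset (Fin d) → ℝ) {i j : Fin d} (hij : i ≠ j) :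
    shapley d v i - shapley d v j
      = ∑ T ∈ ((univ.erase i).erase j).powerset,
          (shapleyWeight d T.card + shapleyWeight d (T.card + 1))
            * (v (insert i T) - v (insert j T)) := by
  rw [shapley_eq_sum_shapleyWeight, shapley_eq_sum_shapleyWeight,
    sum_powerset_erase_shapleyWeight_mul hij, sum_powerset_erase_shapleyWeight_mul hij.symm,
    erase_right_comm, ← sum_sub_distrib]
  refine sum_congr rfl fun T _ => ?_
  rw [insert_comm j i]
  ring

lemma shapKernel_eq_of_card {d t : ℕ} {S : Finset (Fin d)} (hS : S.card = t + 1)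
    (ht : t + 2 ≤ d) :
    shapKernel d S = ((d : ℝ) - 1) / d * (shapleyWeight d t + shapleyWeight d (t + 1)) := by
  obtain ⟨m, rfl⟩ : ∃ m, d = t + 1 + (m + 1) := ⟨d - t - 2, by omega⟩
  have hfac := Nat.choose_mul_factorial_mul_factorial (Nat.le_add_right (t + 1) (m + 1))
  rw [Nat.add_sub_cancel_left] at hfac
  rw [shapKernel, shapleyWeight, shapleyWeight, hS,
    show t + 1 + (m + 1) - t - 1 = m + 1 by omega,
    show t + 1 + (m + 1) - (t + 1) - 1 = m by omega, ← hfac]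
  simp only [Nat.factorial_succ]
  push_cast
  have : ((t + 1 + (m + 1)).choose (t + 1) : ℝ) ≠ 0 := by
    exact_mod_cast (Nat.choose_pos (by omega)).ne'
  field_simp
  ring

lemma shapKernel_insert {d : ℕ} {i j : Fin d} (hij : i ≠ j) {T : Finset (Fin d)}
    (hT : T ∈ ((univ.erase i).erase j).powerset) :
    shapKernel d (insert i T)
      = ((d : ℝ) - 1) / d * (shapleyWeight d T.card + shapleyWeight d (T.card + 1)) := by
  simp only [mem_powerset, subset_erase, subset_univ, true_and] at hT
  obtain ⟨hi, hj⟩ := hT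
  refine shapKernel_eq_of_card (card_insert_of_notMem hi) ?_
  have := card_le_univ (insert i (insert j T))
  simp only [card_insert_of_notMem hj,
    card_insert_of_notMem (mem_insert.not.2 (not_or.2 ⟨hij, hi⟩)), Fintype.card_fin] at this
  omega

lemma sum_powerset_shapKernel_insert {d : ℕ} {i j : Fin d} (hij : i ≠ j) :
    ∑ T ∈ ((univ.erase i).erase j).powerset, shapKernel d (insert i T) = ((d : ℝ) - 1) / d := by
  have hsum := sum_powerset_erase_shapleyWeight_mul hij (fun _ => 1)
  simp only [mul_one] at hsum
  rw [sum_congr rfl fun T hT => shapKernel_insert hij hT, ← mul_sum, ← hsum,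
    sum_powerset_erase_shapleyWeight, mul_one]

lemma sum_powerset_shapKernel_insert_mul_sub {d : ℕ} (v : Finset (Fin d) → ℝ) {i j : Fin d}
    (hij : i ≠ j) :
    ∑ T ∈ ((univ.erase i).erase j).powerset,
        shapKernel d (insert i T) * (v (insert i T) - v (insert j T))
      = ((d : ℝ) - 1) / d * (shapley d v i - shapley d v j) := by
  rw [shapley_sub_shapley v hij, mul_sum]
  refine sum_congr rfl fun T hT => ?_
  rw [shapKernel_insert hij hT, mul_assoc]

lemma sum_filter_mem_shapKernel_mul_residual_eq {d : ℕ} (v : Finset (Fin d) → ℝ) (i j : Fin d) :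
    ∑ S with i ∈ S, shapKernel d S * (v S - v ∅ - ∑ k ∈ S, shapley d v k)
      = ∑ S with j ∈ S, shapKernel d S * (v S - v ∅ - ∑ k ∈ S, shapley d v k) := by
  rcases eq_or_ne i j with rfl | hij
  · rfl
  have term : ∀ T ∈ ((univ.erase i).erase j).powerset,
      shapKernel d (insert i T) * (v (insert i T) - v ∅ - ∑ k ∈ insert i T, shapley d v k)
        - shapKernel d (insert j T) * (v (insert j T) - v ∅ - ∑ k ∈ insert j T, shapley d v k)
      = shapKernel d (insert i T) * (v (insert i T) - v (insert j T))
        - shapKernel d (insert i T) * (shapley d v i - shapley d v j) := fun T hT => by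
    have hT' : T ∈ ((univ.erase j).erase i).powerset := by rwa [erase_right_comm]
    rw [shapKernel_insert hij.symm hT', ← shapKernel_insert hij hT,
      sum_insert (notMem_of_mem_powerset_of_notMem hT' (notMem_erase i _)),
      sum_insert (notMem_of_mem_powerset_of_notMem hT (notMem_erase j _))]
    ring
  rw [← sub_eq_zero, sum_filter_mem_sub_sum_filter_mem, sum_filter_mem_notMem_eq_sum_powerset hij,
    sum_filter_mem_notMem_eq_sum_powerset hij.symm, erase_right_comm (a := j), ← sum_sub_distrib,
    sum_congr rfl term, sum_sub_distrib, ← sum_mul, sum_powerset_shapKernel_insert_mul_sub v hij,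
    sum_powerset_shapKernel_insert hij, sub_self]

-- `x / 0 = 0`: the denominator of `shapKernel` vanishes at `∅` and at `univ`.
lemma shapKernel_eq_zero_of_not_proper {d : ℕ} {S : Finset (Fin d)}
    (hS : ¬(S.Nonempty ∧ S ≠ univ)) : shapKernel d S = 0 := by
  rcases S.eq_empty_or_nonempty with rfl | hne
  · simp [shapKernel]
  · obtain rfl : S = univ := not_not.1 (fun h => hS ⟨hne, h⟩)
    simp [shapKernel]

lemma lsLoss_eq_sum {d : ℕ} (v : Finset (Fin d) → ℝ) (φ : Fin d → ℝ) :
    lsLoss d v φ = ∑ S, shapKernel d S * (v S - v ∅ - ∑ j ∈ S, φ j) ^ 2 := by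
  rw [lsLoss, sum_filter]
  refine sum_congr rfl fun S _ => ?_
  split_ifs with hS
  · rfl
  · rw [shapKernel_eq_zero_of_not_proper hS, zero_mul]

lemma lsLoss_eq_lsLoss_shapley_add {d : ℕ} (v : Finset (Fin d) → ℝ) {φ : Fin d → ℝ}
    (hφ : ∑ i, φ i = v univ - v ∅) :
    lsLoss d v φ
      = lsLoss d v (shapley d v) + ((d : ℝ) - 1) / d * ∑ i, (φ i - shapley d v i) ^ 2 := by
  set h := fun i => φ i - shapley d v i
  have h0 : ∑ i, h i = 0 := by simp only [h, sum_sub_distrib, hφ, sum_shapley, sub_self]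
  have cross := sum_mul_sum_eq_zero_of_sum_filter_mem_eq
    (sum_filter_mem_shapKernel_mul_residual_eq v) h0
  have quad := sum_mul_sq_sum_eq_of_sum_filter_mem_notMem
    (fun i j hij => (sum_filter_mem_notMem_eq_sum_powerset hij _).trans
      (sum_powerset_shapKernel_insert hij)) h0
  have expand : ∀ S : Finset (Fin d),
      shapKernel d S * (v S - v ∅ - ∑ k ∈ S, φ k) ^ 2
        = shapKernel d S * (v S - v ∅ - ∑ k ∈ S, shapley d v k) ^ 2
          - 2 * (shapKernel d S * (v S - v ∅ - ∑ k ∈ S, shapley d v k) * ∑ k ∈ S, h k)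
          + shapKernel d S * (∑ k ∈ S, h k) ^ 2 := fun S => by
    simp only [h, sum_sub_distrib]
    ring
  rw [lsLoss_eq_sum, lsLoss_eq_sum, sum_congr rfl fun S _ => expand S, sum_add_distrib,
    sum_sub_distrib, ← mul_sum, cross, quad, mul_zero, sub_zero]

/-- the Shapley value vector is the unique minimizer of the constrained
weighted least squares problem. -/
theorem shapley_unique_ls_minimizer (d : ℕ) (hd : 2 ≤ d) (v : Finset (Fin d) → ℝ) :
    (∑ i, shapley d v i = v Finset.univ - v ∅) ∧
      ∀ φ : Fin d → ℝ, (∑ i, φ i = v Finset.univ - v ∅) →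
        (lsLoss d v (shapley d v) ≤ lsLoss d v φ ∧
          (lsLoss d v φ = lsLoss d v (shapley d v) → φ = shapley d v)) := by
  refine ⟨sum_shapley d v, fun φ hφ => ?_⟩
  have hd' : (2 : ℝ) ≤ d := by exact_mod_cast hd
  have hκ : 0 < ((d : ℝ) - 1) / d := div_pos (by linarith) (by linarith)
  have hsq : 0 ≤ ∑ i, (φ i - shapley d v i) ^ 2 := sum_nonneg fun i _ => sq_nonneg _
  rw [lsLoss_eq_lsLoss_shapley_add v hφ]
  refine ⟨le_add_of_nonneg_right (mul_nonneg hκ.le hsq), fun heq => ?_⟩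
  have hzero : ∑ i, (φ i - shapley d v i) ^ 2 = 0 :=
    (mul_eq_zero.1 (add_eq_left.1 heq)).resolve_left hκ.ne'
  funext i
  exact sub_eq_zero.1 (pow_eq_zero_iff two_ne_zero |>.1
    ((sum_eq_zero_iff_of_nonneg fun i _ => sq_nonneg _).1 hzero i (mem_univ i)))
end

section
/- The Shapley value admits the closed-form linear-transformation expression: φ = ((d·I − J)/(d−1))·(U^T W v) + ((v(N) − v(∅))/d)·1, where 1 is the all-ones vector. -/
/-!
Both sides are linear in `v`, so it suffices to compare the coefficients of each `v S`. In the
Shapley value of player `i` that coefficient is `1 / (s * C(d, s))` if `i ∈ S` and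
`-1 / ((d - s) * C(d, s))` otherwise, where `s = |S|`. Since `Uᵀ W v` has `i`-th entry
`∑_{S ∋ i} k(S) v(S)`, the centering matrix `d • I - J` produces the coefficient
`k(S) * (d * [i ∈ S] - s)`, and `k(S) / (d - 1) = 1 / (C(d, s) * s * (d - s))` turns it into the
Shapley coefficient for every nonempty proper `S`. The two remaining subsets `N` and `∅` carry
the coefficients `1 / d` and `-1 / d`, which make up the constant term.
-/

open Finset Matrix

lemma factorial_mul_factorial_sub_one_div_factorial {s d : ℕ} (hsd : s < d) :
    (s.factorial * (d - s - 1).factorial : ℝ) / d.factorial = (((d : ℝ) - s) * d.choose s)⁻¹ := by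
  have hsub : (d - s).factorial = (d - s) * (d - s - 1).factorial :=
    (Nat.mul_factorial_pred (by omega)).symm
  rw [Nat.cast_choose ℝ hsd.le, hsub]
  push_cast [hsd.le]
  have : (d : ℝ) - s ≠ 0 := sub_ne_zero.2 (by exact_mod_cast hsd.ne')
  field_simp

lemma succ_mul_choose_succ_eq_sub_mul_choose {s d : ℕ} (hsd : s < d) :
    ((s + 1 : ℝ) * d.choose (s + 1)) = ((d : ℝ) - s) * d.choose s := by
  have h := Nat.choose_succ_right_eq d s
  rw [mul_comm, mul_comm _ (d.choose s : ℝ), ← Nat.cast_sub hsd.le]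
  exact_mod_cast h

lemma mulVec_smul_one_sub_allOnes_apply {n R : Type*} [Fintype n] [DecidableEq n] [CommRing R]
    (c : R) (x : n → R) (i : n) :
    ((c • (1 : Matrix n n R) - of fun _ _ => 1) *ᵥ x) i = c * x i - ∑ j, x j := by
  rw [sub_mulVec, smul_mulVec, one_mulVec]
  simp [mulVec, dotProduct]

lemma sum_eq_add_add_sum_nonempty_ne_univ {α M : Type*} [Fintype α] [Nonempty α] [DecidableEq α]
    [AddCommMonoid M] (f : Finset α → M) :
    ∑ S, f S = f univ + f ∅ + ∑ S : {S : Finset α // S.Nonempty ∧ S ≠ univ}, f S.1 := by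
  have hboundary : ({S | ¬(S.Nonempty ∧ S ≠ univ)} : Finset (Finset α)) = {univ, ∅} := by
    ext S
    simp only [Finset.mem_filter, Finset.mem_univ, true_and, Finset.mem_insert,
      Finset.mem_singleton, not_and_not_right, Finset.nonempty_iff_ne_empty]
    tauto
  rw [← Finset.sum_filter_add_sum_filter_not univ (fun S => S.Nonempty ∧ S ≠ univ), hboundary,
    Finset.sum_pair Finset.univ_nonempty.ne_empty, add_comm,
    Finset.sum_subtype (p := fun S => S.Nonempty ∧ S ≠ univ) _ (by simp)]

noncomputable def shapleyCoeff (d : ℕ) (i : Fin d) (S : Finset (Fin d)) : ℝ :=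
  if i ∈ S then ((S.card : ℝ) * d.choose S.card)⁻¹ else -(((d : ℝ) - S.card) * d.choose S.card)⁻¹

section ClosedForm

variable {d : ℕ}

lemma shapleyCoeff_univ (i : Fin d) : shapleyCoeff d i univ = 1 / d := by
  simp [shapleyCoeff]

lemma shapleyCoeff_empty (i : Fin d) : shapleyCoeff d i ∅ = -1 / d := by
  simp [shapleyCoeff, neg_div]

lemma shapley_eq_sum_shapleyCoeff_mul (v : Finset (Fin d) → ℝ) (i : Fin d) :
    shapley d v i = ∑ S, shapleyCoeff d i S * v S := by
  rw [← Finset.powerset_univ, ← Finset.insert_erase (Finset.mem_univ i),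
    Finset.sum_powerset_insert (Finset.notMem_erase i _), add_comm, shapley,
    ← Finset.sum_add_distrib]
  refine Finset.sum_congr rfl fun S hS => ?_
  have hiS : i ∉ S := fun h => Finset.notMem_erase i _ (Finset.mem_powerset.1 hS h)
  have hsd : S.card < d := by
    have := Finset.card_le_card (Finset.mem_powerset.1 hS)
    rw [Finset.card_erase_of_mem (Finset.mem_univ i), Finset.card_univ, Fintype.card_fin] at this
    have := i.pos
    omega
  simp only [shapleyCoeff, Finset.mem_insert_self, if_true, hiS, if_false,
    Finset.card_insert_of_notMem hiS, Nat.cast_succ, succ_mul_choose_succ_eq_sub_mul_choose hsd,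
    ← factorial_mul_factorial_sub_one_div_factorial hsd]
  ring

lemma indMat_transpose_mulVec_apply (x : {S : Finset (Fin d) // S.Nonempty ∧ S ≠ univ} → ℝ)
    (j : Fin d) :
    ((indMat d)ᵀ *ᵥ x) j = ∑ S, if j ∈ S.1 then x S else 0 := by
  simp [mulVec, dotProduct, indMat]

lemma sum_indMat_transpose_mulVec (x : {S : Finset (Fin d) // S.Nonempty ∧ S ≠ univ} → ℝ) :
    ∑ j, ((indMat d)ᵀ *ᵥ x) j = ∑ S, (S.1.card : ℝ) * x S := by
  simp only [indMat_transpose_mulVec_apply]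
  rw [Finset.sum_comm]
  simp [Finset.sum_ite_mem]

lemma shapKernel_div_mul_eq_shapleyCoeff (i : Fin d) {S : Finset (Fin d)} (hne : S.Nonempty)
    (hS : S ≠ univ) :
    shapKernel d S / (d - 1) * (if i ∈ S then (d : ℝ) - S.card else -S.card) =
      shapleyCoeff d i S := by
  have hpos : 0 < S.card := hne.card_pos
  have hs : (S.card : ℝ) ≠ 0 := by exact_mod_cast hpos.ne'
  have hsd : S.card < d := by simpa using Finset.card_lt_card (Finset.ssubset_univ_iff.2 hS)
  have hds : (d : ℝ) - S.card ≠ 0 := sub_ne_zero.2 (by exact_mod_cast hsd.ne')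
  have hd : (d : ℝ) - 1 ≠ 0 := sub_ne_zero.2 (by exact_mod_cast (by omega : d ≠ 1))
  have hc : (d.choose S.card : ℝ) ≠ 0 := by exact_mod_cast (Nat.choose_pos hsd.le).ne'
  unfold shapKernel shapleyCoeff
  split_ifs <;> field_simp

lemma centering_mulVec_indMat_transpose_mulVec_apply
    (x : {S : Finset (Fin d) // S.Nonempty ∧ S ≠ univ} → ℝ) (i : Fin d) :
    (((d : ℝ) • (1 : Matrix (Fin d) (Fin d) ℝ) - of fun _ _ => 1) *ᵥ ((indMat d)ᵀ *ᵥ x)) i =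
      ∑ S, (if i ∈ S.1 then (d : ℝ) - S.1.card else -S.1.card) * x S := by
  rw [mulVec_smul_one_sub_allOnes_apply, sum_indMat_transpose_mulVec,
    indMat_transpose_mulVec_apply, Finset.mul_sum, ← Finset.sum_sub_distrib]
  refine Finset.sum_congr rfl fun S _ => ?_
  split_ifs <;> ring

end ClosedForm

theorem shapley_closed_form_general (d : ℕ) (v : Finset (Fin d) → ℝ) :
    (fun i => shapley d v i) =
      (1 / ((d : ℝ) - 1)) •
        (((d : ℝ) • (1 : Matrix (Fin d) (Fin d) ℝ) - Matrix.of fun _ _ => (1 : ℝ)).mulVec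
          (((indMat d)ᵀ * wMat d).mulVec (fun S => v S.1))) +
        (fun _ => (v Finset.univ - v ∅) / d) := by
  funext i
  have : Nonempty (Fin d) := ⟨i⟩
  rw [shapley_eq_sum_shapleyCoeff_mul, sum_eq_add_add_sum_nonempty_ne_univ, shapleyCoeff_univ,
    shapleyCoeff_empty, ← mulVec_mulVec, Pi.add_apply, Pi.smul_apply,
    centering_mulVec_indMat_transpose_mulVec_apply, smul_eq_mul, Finset.mul_sum, add_comm]
  congr 1
  · refine Finset.sum_congr rfl fun S _ => ?_
    rw [wMat, mulVec_diagonal, ← shapKernel_div_mul_eq_shapleyCoeff i S.2.1 S.2.2]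
    ring
  · ring

/-- closed-form expression
`φ = ((d·I − J)/(d−1))·(Uᵀ W v) + ((v(N) − v(∅))/d)·1`. -/
theorem shapley_closed_form (d : ℕ) (hd : 2 ≤ d) (v : Finset (Fin d) → ℝ) :
    (fun i => shapley d v i) =
      (1 / ((d : ℝ) - 1)) •
        (((d : ℝ) • (1 : Matrix (Fin d) (Fin d) ℝ) - Matrix.of fun _ _ => (1 : ℝ)).mulVec
          (((indMat d)ᵀ * wMat d).mulVec (fun S => v S.1))) +
        (fun _ => (v Finset.univ - v ∅) / d) :=
  shapley_closed_form_general d v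
end
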